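/- arXiv:1312.6353 — 5 statements merged into one kernel-verified Lean document; each statement's English description precedes it below -/
import Mathlib

section
/- Let ε > 0 and let I ⊆ ℝ be an interval. Let a : I → ℝ, c₁ : I → ℝ^{1×2}, c₂ : I → ℝ^{2×1}, B : I → ℝ^{2×2} be continuous, and define the 3×3 matrix 𝒜(s) with block form 𝒜(s) = [[a(s), c₁(s)], [ε c₂(s), ε B(s)]]. Suppose p₁ : I → ℝ^{1×2} and p₂ : I → ℝ^{2×1} are differentiable and satisfy on I the Riccati equations ε p₁' = c₁ + a p₁ − ε p₁ B − ε p₁ c₂ p₁ and ε p₂' = c₂ − a p₂ + ε B p₂ − ε p₂ c₁ p₂, and that the matrix S(s) = [[1, p₁(s)], [ε p₂(s), I₂]] is invertible for every s ∈ I. Set d₁(s) = a(s) + ε c₁(s) p₂(s) and D₂(s) = B(s) + c₂(s) p₁(s). Let V(s,r) denote the principal solution of η' = D₂(s) η (i.e. ∂ₛ V(s,r) = D₂(s) V(s,r), V(r,r) = I₂), and let U(s,r) denote the principal solution of ε ζ' = 𝒜(s) ζ (i.e. ε ∂ₛ U(s,r) = 𝒜(s) U(s,r), U(r,r) = I₃).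 Then for all r, s ∈ I, U(s,r) = S(s) · diag( exp((1/ε)∫_r^s d₁(u) du), V(s,r) ) · S(r)⁻¹. -/
/-!
`S(s)` is a Lyapunov transformation carrying the block-diagonal system with generator
`diag(d₁/ε, D₂)` to the system with generator `𝒜/ε`: the Riccati equations for `p₁, p₂` say
exactly that `S' = (𝒜/ε) S - S diag(d₁/ε, D₂)`. The principal solution of the block-diagonal
system is `diag(exp((1/ε)∫_r^s d₁), V(s,r))`, so `s ↦ S(s) diag(…) S(r)⁻¹` solves
`ε ζ' = 𝒜 ζ` with value `1` at `s = r`, and it coincides with `U(·,r)` by uniqueness of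
solutions of linear equations with continuous coefficients.
-/

open Matrix Set
open scoped Topology

attribute [local instance] Matrix.normedAddCommGroup Matrix.normedSpace

theorem Set.OrdConnected.hasDerivWithinAt_integral {I : Set ℝ} (hI : I.OrdConnected)
    {f : ℝ → ℝ} (hf : ContinuousOn f I) {a t : ℝ} (ha : a ∈ I) (ht : t ∈ I) :
    HasDerivWithinAt (fun u => ∫ x in a..u, f x) (f t) I t := by
  -- FTC-1 applies along `𝓝[I] t` because `I` contains every interval between its points.
  have : intervalIntegral.FTCFilter t (𝓝[I] t) (𝓝[I] t) :=
    { toTendstoIxxClass := Filter.tendstoIxxClass_of_subset fun _ _ => Ioc_subset_Icc_self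
      pure_le := pure_le_nhdsWithin ht
      le_nhds := inf_le_left
      meas_gen := hI.measurableSet.nhdsWithin_isMeasurablyGenerated t }
  exact intervalIntegral.integral_hasDerivWithinAt_right
    ((hf.mono (hI.uIcc_subset ha ht)).intervalIntegrable)
    (hf.stronglyMeasurableAtFilter_nhdsWithin hI.measurableSet t) (hf t ht)

theorem ODE_solution_unique_of_mem_uIcc {E : Type*} [NormedAddCommGroup E] [NormedSpace ℝ E]
    {v : ℝ → E → E} {K : NNReal} {f g : ℝ → E} {a b : ℝ}
    (hv : ∀ t ∈ uIcc a b, LipschitzWith K (v t))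
    (hf : ∀ t ∈ uIcc a b, HasDerivWithinAt f (v t (f t)) (uIcc a b) t)
    (hg : ∀ t ∈ uIcc a b, HasDerivWithinAt g (v t (g t)) (uIcc a b) t)
    (ha : f a = g a) : f b = g b := by
  have hfc : ContinuousOn f (uIcc a b) := fun t ht => (hf t ht).continuousWithinAt
  have hgc : ContinuousOn g (uIcc a b) := fun t ht => (hg t ht).continuousWithinAt
  rcases le_total a b with hab | hba
  · rw [uIcc_of_le hab] at hv hf hg hfc hgc
    have hnhds : ∀ t ∈ Ico a b, Icc a b ∈ 𝓝[≥] t := fun t ht => Icc_mem_nhdsGE_of_mem ht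
    refine ODE_solution_unique_of_mem_Icc_right (s := fun _ => univ)
      (fun t ht => (hv t (Ico_subset_Icc_self ht)).lipschitzOnWith) hfc
      (fun t ht => (hf t (Ico_subset_Icc_self ht)).mono_of_mem_nhdsWithin (hnhds t ht))
      (fun _ _ => mem_univ _) hgc
      (fun t ht => (hg t (Ico_subset_Icc_self ht)).mono_of_mem_nhdsWithin (hnhds t ht))
      (fun _ _ => mem_univ _) ha (right_mem_Icc.2 hab)
  · rw [uIcc_of_ge hba] at hv hf hg hfc hgc
    have hnhds : ∀ t ∈ Ioc b a, Icc b a ∈ 𝓝[≤] t := fun t ht => Icc_mem_nhdsLE_of_mem ht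
    refine ODE_solution_unique_of_mem_Icc_left (s := fun _ => univ)
      (fun t ht => (hv t (Ioc_subset_Icc_self ht)).lipschitzOnWith) hfc
      (fun t ht => (hf t (Ioc_subset_Icc_self ht)).mono_of_mem_nhdsWithin (hnhds t ht))
      (fun _ _ => mem_univ _) hgc
      (fun t ht => (hg t (Ioc_subset_Icc_self ht)).mono_of_mem_nhdsWithin (hnhds t ht))
      (fun _ _ => mem_univ _) ha (left_mem_Icc.2 hba)

namespace Matrix

variable {l m n o : Type*}

theorem norm_mul_le_card_mul [Fintype l] [Fintype m] [Fintype n]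
    (A : Matrix l m ℝ) (B : Matrix m n ℝ) :
    ‖A * B‖ ≤ Fintype.card m * ‖A‖ * ‖B‖ := by
  refine (norm_le_iff (by positivity)).2 fun i j => ?_
  calc ‖(A * B) i j‖ ≤ ∑ k, ‖A i k * B k j‖ := by rw [mul_apply]; exact norm_sum_le _ _
    _ ≤ ∑ _k : m, ‖A‖ * ‖B‖ := Finset.sum_le_sum fun k _ => by
        rw [norm_mul]
        exact mul_le_mul (norm_entry_le_entrywise_sup_norm A)
          (norm_entry_le_entrywise_sup_norm B) (norm_nonneg _) (norm_nonneg _)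
    _ = Fintype.card m * ‖A‖ * ‖B‖ := by simp [mul_assoc]

theorem lipschitzWith_mul_left [Fintype m] [Fintype n] [Fintype o] (A : Matrix m n ℝ) :
    LipschitzWith (Fintype.card n * ‖A‖₊) fun X : Matrix n o ℝ => A * X :=
  LipschitzWith.of_dist_le_mul fun X Y => by
    simpa [dist_eq_norm, ← Matrix.mul_sub] using norm_mul_le_card_mul A (X - Y)

theorem eqOn_of_hasDerivWithinAt_mul [Fintype n] [Fintype o] {I : Set ℝ} (hI : I.OrdConnected)
    {A : ℝ → Matrix n n ℝ} (hA : ContinuousOn A I) {X Y : ℝ → Matrix n o ℝ}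
    (hX : ∀ t ∈ I, HasDerivWithinAt X (A t * X t) I t)
    (hY : ∀ t ∈ I, HasDerivWithinAt Y (A t * Y t) I t) {r : ℝ} (hr : r ∈ I) (hXY : X r = Y r) :
    EqOn X Y I := by
  intro s hs
  have hsub := hI.uIcc_subset hr hs
  obtain ⟨C, hC⟩ := isCompact_uIcc.exists_bound_of_continuousOn (hA.mono hsub)
  have hv (t) (ht : t ∈ uIcc r s) :
      LipschitzWith (Fintype.card n * C.toNNReal) fun Z : Matrix n o ℝ => A t * Z := by
    refine (lipschitzWith_mul_left (A t)).weaken ?_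
    gcongr
    rw [← NNReal.coe_le_coe, Real.coe_toNNReal', coe_nnnorm]
    exact (hC t ht).trans (le_max_left _ _)
  exact ODE_solution_unique_of_mem_uIcc hv (fun t ht => (hX t (hsub ht)).mono hsub)
    (fun t ht => (hY t (hsub ht)).mono hsub) hXY

theorem eq_smul_one_of_fin_one (M : Matrix (Fin 1) (Fin 1) ℝ) : M = M 0 0 • 1 := by
  ext i j
  fin_cases i; fin_cases j; simp

theorem hasDerivWithinAt_iff [Fintype m] [Fintype n] {f : ℝ → Matrix m n ℝ} {f' : Matrix m n ℝ}
    {s : Set ℝ} {x : ℝ} :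
    HasDerivWithinAt f f' s x ↔ ∀ i j, HasDerivWithinAt (fun t => f t i j) (f' i j) s x :=
  hasDerivWithinAt_pi.trans <| forall_congr' fun _ => hasDerivWithinAt_pi

end Matrix

section

variable {l m n o : Type*} {s : Set ℝ} {x : ℝ}

theorem HasDerivWithinAt.matrix_mul [Fintype l] [Fintype m] [Fintype n]
    {A : ℝ → Matrix l m ℝ} {B : ℝ → Matrix m n ℝ} {A' : Matrix l m ℝ} {B' : Matrix m n ℝ}
    (hA : HasDerivWithinAt A A' s x) (hB : HasDerivWithinAt B B' s x) :
    HasDerivWithinAt (fun t => A t * B t) (A' * B x + A x * B') s x := by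
  rw [Matrix.hasDerivWithinAt_iff] at hA hB ⊢
  intro i j
  simp only [mul_apply, Matrix.add_apply, ← Finset.sum_add_distrib]
  exact HasDerivWithinAt.fun_sum fun k _ => (hA i k).fun_mul (hB k j)

theorem HasDerivWithinAt.matrix_fromBlocks [Fintype l] [Fintype m] [Fintype n] [Fintype o]
    {A : ℝ → Matrix l n ℝ} {B : ℝ → Matrix l o ℝ} {C : ℝ → Matrix m n ℝ} {D : ℝ → Matrix m o ℝ}
    {A' B' C' D'} (hA : HasDerivWithinAt A A' s x) (hB : HasDerivWithinAt B B' s x)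
    (hC : HasDerivWithinAt C C' s x) (hD : HasDerivWithinAt D D' s x) :
    HasDerivWithinAt (fun t => fromBlocks (A t) (B t) (C t) (D t)) (fromBlocks A' B' C' D') s
      x := by
  rw [Matrix.hasDerivWithinAt_iff] at hA hB hC hD ⊢
  rintro (i | i) (j | j)
  exacts [hA i j, hB i j, hC i j, hD i j]

theorem ContinuousOn.matrix_fromBlocks
    {A : ℝ → Matrix l n ℝ} {B : ℝ → Matrix l o ℝ} {C : ℝ → Matrix m n ℝ} {D : ℝ → Matrix m o ℝ}
    (hA : ContinuousOn A s) (hB : ContinuousOn B s) (hC : ContinuousOn C s)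
    (hD : ContinuousOn D s) :
    ContinuousOn (fun t => fromBlocks (A t) (B t) (C t) (D t)) s :=
  continuousOn_iff_continuous_domRestrict.2 <|
    hA.domRestrict.matrix_fromBlocks hB.domRestrict hC.domRestrict hD.domRestrict

theorem HasDerivWithinAt.lyapunovTransform_mul [Fintype l] [Fintype m] [Fintype n] [Fintype o]
    {S : ℝ → Matrix l m ℝ} {Φ : ℝ → Matrix m n ℝ} {A : Matrix l l ℝ} {N : Matrix m m ℝ}
    (hS : HasDerivWithinAt S (A * S x - S x * N) s x) (hΦ : HasDerivWithinAt Φ (N * Φ x) s x)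
    (C : Matrix n o ℝ) :
    HasDerivWithinAt (fun t => S t * Φ t * C) (A * (S x * Φ x * C)) s x := by
  refine ((hS.matrix_mul hΦ).matrix_mul (hasDerivWithinAt_const x s C)).congr_deriv ?_
  simp only [Matrix.mul_zero, add_zero, Matrix.sub_mul, Matrix.mul_assoc, sub_add_cancel]

theorem HasDerivWithinAt.fromBlocks_exp_smul_one [Fintype m] [Fintype n] [Fintype o]
    [DecidableEq m] {F : ℝ → ℝ} {f : ℝ} {V : ℝ → Matrix n o ℝ} {D : Matrix n n ℝ}
    (hF : HasDerivWithinAt F f s x) (hV : HasDerivWithinAt V (D * V x) s x) :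
    HasDerivWithinAt (fun t => fromBlocks (Real.exp (F t) • (1 : Matrix m m ℝ)) 0 0 (V t))
      (fromBlocks (f • (1 : Matrix m m ℝ)) 0 0 D *
        fromBlocks (Real.exp (F x) • (1 : Matrix m m ℝ)) 0 0 (V x)) s x := by
  refine ((hF.exp.smul_const (1 : Matrix m m ℝ)).matrix_fromBlocks
    (hasDerivWithinAt_const x s (0 : Matrix m o ℝ))
    (hasDerivWithinAt_const x s (0 : Matrix n m ℝ)) hV).congr_deriv ?_
  rw [fromBlocks_multiply]
  simp [smul_smul, mul_comm]

end

theorem riccati_fromBlocks {n : Type*} [Fintype n] [DecidableEq n] {ε : ℝ} (hε : ε ≠ 0) (a : ℝ)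
    (c₁ p₁ p₁' : Matrix (Fin 1) n ℝ) (c₂ p₂ p₂' : Matrix n (Fin 1) ℝ) (B : Matrix n n ℝ)
    (h₁ : ε • p₁' = c₁ + a • p₁ - ε • (p₁ * B) - ε • (p₁ * c₂ * p₁))
    (h₂ : ε • p₂' = c₂ - a • p₂ + ε • (B * p₂) - ε • (p₂ * c₁ * p₂)) :
    (ε⁻¹ • fromBlocks (a • 1) c₁ (ε • c₂) (ε • B)) * fromBlocks 1 p₁ (ε • p₂) 1 -
      fromBlocks 1 p₁ (ε • p₂) 1 *
        fromBlocks ((1 / ε * (a + ε * (c₁ * p₂) 0 0)) • 1) 0 0 (B + c₂ * p₁) =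
      fromBlocks 0 p₁' (ε • p₂') 0 := by
  have hp₂c₁p₂ : p₂ * c₁ * p₂ = (c₁ * p₂) 0 0 • p₂ := by
    rw [Matrix.mul_assoc, eq_smul_one_of_fin_one (c₁ * p₂), Matrix.mul_smul, Matrix.mul_one]
    simp
  rw [sub_eq_iff_eq_add, fromBlocks_smul, fromBlocks_multiply, fromBlocks_multiply,
    fromBlocks_add, fromBlocks_inj]
  simp only [Matrix.smul_mul, Matrix.mul_smul, Matrix.mul_one, Matrix.one_mul, Matrix.mul_zero,
    Matrix.mul_add, add_zero, zero_add, smul_smul]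
  refine ⟨?_, ?_, ?_, ?_⟩
  · ext i j
    fin_cases i; fin_cases j
    simp only [mul_inv_cancel₀ hε, one_smul, Matrix.add_apply, Matrix.smul_apply, one_apply_eq,
      smul_eq_mul, mul_one, Fin.zero_eta]
    field_simp
  · rw [← inv_smul_smul₀ hε p₁', h₁]
    simp only [smul_sub, smul_add, smul_smul, inv_mul_cancel₀ hε, one_smul, Matrix.mul_assoc]
    abel
  · rw [h₂, hp₂c₁p₂]
    match_scalars
    all_goals field_simp
    ring
  · rw [inv_mul_cancel₀ hε, one_smul, one_smul, add_comm]

/-- Block-diagonalization of the principal solution of the slow-fast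
linear system `ε ζ' = 𝒜(s) ζ` by means of solutions `p₁, p₂` of the associated
Riccati equations: `U(s,r) = S(s) · diag(e^{(1/ε)∫_r^s d₁}, V(s,r)) · S(r)⁻¹`. -/
theorem principal_solution_block_diagonalization (ε : ℝ) (hε : 0 < ε)
    (I : Set ℝ) (hI : I.OrdConnected)
    (a : ℝ → ℝ) (c₁ : ℝ → Matrix (Fin 1) (Fin 2) ℝ) (c₂ : ℝ → Matrix (Fin 2) (Fin 1) ℝ)
    (B : ℝ → Matrix (Fin 2) (Fin 2) ℝ)
    (ha : ContinuousOn a I) (hc₁ : ContinuousOn c₁ I) (hc₂ : ContinuousOn c₂ I)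
    (hB : ContinuousOn B I)
    (𝒜 : ℝ → Matrix (Fin 1 ⊕ Fin 2) (Fin 1 ⊕ Fin 2) ℝ)
    (h𝒜 : ∀ s, 𝒜 s = Matrix.fromBlocks (a s • 1) (c₁ s) (ε • c₂ s) (ε • B s))
    (p₁ p₁' : ℝ → Matrix (Fin 1) (Fin 2) ℝ) (p₂ p₂' : ℝ → Matrix (Fin 2) (Fin 1) ℝ)
    (hp₁ : ∀ s ∈ I, HasDerivWithinAt p₁ (p₁' s) I s)
    (hp₂ : ∀ s ∈ I, HasDerivWithinAt p₂ (p₂' s) I s)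
    (hp₁eq : ∀ s ∈ I,
      ε • p₁' s = c₁ s + a s • p₁ s - ε • (p₁ s * B s) - ε • (p₁ s * c₂ s * p₁ s))
    (hp₂eq : ∀ s ∈ I,
      ε • p₂' s = c₂ s - a s • p₂ s + ε • (B s * p₂ s) - ε • (p₂ s * c₁ s * p₂ s))
    (S : ℝ → Matrix (Fin 1 ⊕ Fin 2) (Fin 1 ⊕ Fin 2) ℝ)
    (hS : ∀ s, S s = Matrix.fromBlocks 1 (p₁ s) (ε • p₂ s) 1)
    (hSinv : ∀ s ∈ I, IsUnit (S s))
    (d₁ : ℝ → ℝ) (hd₁ : ∀ s, d₁ s = a s + ε * (c₁ s * p₂ s) 0 0)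
    (D₂ : ℝ → Matrix (Fin 2) (Fin 2) ℝ) (hD₂ : ∀ s, D₂ s = B s + c₂ s * p₁ s)
    -- `V (· , r)` is the principal solution of `η' = D₂(s) η` with `V r r = 1`
    (V : ℝ → ℝ → Matrix (Fin 2) (Fin 2) ℝ)
    (hV : ∀ r ∈ I, ∀ s ∈ I, HasDerivWithinAt (fun s => V s r) (D₂ s * V s r) I s)
    (hV0 : ∀ r ∈ I, V r r = 1)
    -- `U (· , r)` is the principal solution of `ε ζ' = 𝒜(s) ζ` with `U r r = 1`
    (U U' : ℝ → ℝ → Matrix (Fin 1 ⊕ Fin 2) (Fin 1 ⊕ Fin 2) ℝ)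
    (hU : ∀ r ∈ I, ∀ s ∈ I, HasDerivWithinAt (fun s => U s r) (U' s r) I s)
    (hUeq : ∀ r ∈ I, ∀ s ∈ I, ε • U' s r = 𝒜 s * U s r)
    (hU0 : ∀ r ∈ I, U r r = 1) :
    ∀ r ∈ I, ∀ s ∈ I,
      U s r = S s *
        Matrix.fromBlocks (Real.exp ((1 / ε) * ∫ u in r..s, d₁ u) • 1) 0 0 (V s r) *
        (S r)⁻¹ := by
  intro r hr s hs
  have hε₀ : ε ≠ 0 := hε.ne'
  have hp₂c : ContinuousOn p₂ I := fun t ht => (hp₂ t ht).continuousWithinAt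
  have hd₁c : ContinuousOn d₁ I := by
    rw [funext hd₁]
    exact ha.add <| continuousOn_const.mul <| continuousOn_iff_continuous_domRestrict.2 <|
      (hc₁.domRestrict.matrix_mul hp₂c.domRestrict).matrix_elem 0 0
  have h𝒜c : ContinuousOn (fun t => ε⁻¹ • 𝒜 t) I := by
    simp_rw [h𝒜]
    exact ((ha.smul continuousOn_const).matrix_fromBlocks hc₁ (hc₂.const_smul ε)
      (hB.const_smul ε)).const_smul ε⁻¹
  have hUd (t) (ht : t ∈ I) : HasDerivWithinAt (U · r) ((ε⁻¹ • 𝒜 t) * U t r) I t :=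
    (hU r hr t ht).congr_deriv (by rw [Matrix.smul_mul, ← hUeq r hr t ht, inv_smul_smul₀ hε₀])
  have hSd (t) (ht : t ∈ I) : HasDerivWithinAt S
      ((ε⁻¹ • 𝒜 t) * S t - S t * fromBlocks ((1 / ε * d₁ t) • 1) 0 0 (D₂ t)) I t := by
    have hric := riccati_fromBlocks hε₀ (a t) (c₁ t) (p₁ t) (p₁' t) (c₂ t) (p₂ t) (p₂' t) (B t)
      (hp₁eq t ht) (hp₂eq t ht)
    rw [← h𝒜, ← hS, ← hd₁, ← hD₂] at hric
    rw [hric, funext hS]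
    exact (hasDerivWithinAt_const t I 1).matrix_fromBlocks (hp₁ t ht) ((hp₂ t ht).const_smul ε)
      (hasDerivWithinAt_const t I 1)
  have hΦd (t) (ht : t ∈ I) :=
    ((hI.hasDerivWithinAt_integral hd₁c hr ht).const_mul (1 / ε)).fromBlocks_exp_smul_one
      (m := Fin 1) (hV r hr t ht)
  refine Matrix.eqOn_of_hasDerivWithinAt_mul hI h𝒜c hUd
    (fun t ht => (hSd t ht).lyapunovTransform_mul (hΦd t ht) (S r)⁻¹) hr ?_ hs
  simp [hU0 r hr, hV0 r hr, mul_nonsing_inv _ ((isUnit_iff_isUnit_det _).mp (hSinv r hr))]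
end

section
/- Let ε > 0, let I ⊆ ℝ be an interval, and let h : I → (0,∞) be differentiable. Define A₂(s) = [[0, 1], [h(s), 0]] and S₂(s) = (1/√2) · [[h(s)^{−1/4}, −h(s)^{−1/4}], [h(s)^{1/4}, h(s)^{1/4}]]. If ξ₂ : I → ℝ² is differentiable and satisfies ε ξ₂'(s) = A₂(s) ξ₂(s) on I, then ξ₃(s) := S₂(s)⁻¹ ξ₂(s) is differentiable and satisfies ε ξ₃'(s) = A₃(s) ξ₃(s) on I, where A₃(s) = [[h(s)^{1/2}, −(ε/4) h'(s)/h(s)], [−(ε/4) h'(s)/h(s), −h(s)^{1/2}]]. -/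
/-!
With `q = h^{1/4}` the transformation is `S₂⁻¹ = (1/√2) [[q, q⁻¹], [-q, q⁻¹]]`, and for any
matrix function `T` the vector `T ξ₂` solves `ε η' = B η` once `ε T' + T A₂ = B T`. For
`T = S₂⁻¹` this identity with `B = A₃` is checked entrywise, using `h = q⁴`, `√h = q²` and
`q' / q = h' / (4 h)`.
-/

open Matrix

section Gauge

variable {m n : Type*} [Fintype n] {I : Set ℝ} {s : ℝ}

theorem HasDerivWithinAt.matrix_mulVec {M : ℝ → Matrix m n ℝ} {M' : Matrix m n ℝ}
    {ξ : ℝ → n → ℝ} {ξ' : n → ℝ}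
    (hM : ∀ i j, HasDerivWithinAt (fun t => M t i j) (M' i j) I s)
    (hξ : HasDerivWithinAt ξ ξ' I s) :
    HasDerivWithinAt (fun t => M t *ᵥ ξ t) (M' *ᵥ ξ s + M s *ᵥ ξ') I s := by
  refine hasDerivWithinAt_pi.2 fun i => ?_
  simp only [Pi.add_apply, mulVec, dotProduct, ← Finset.sum_add_distrib]
  exact HasDerivWithinAt.fun_sum fun j _ => (hM i j).mul (hasDerivWithinAt_pi.1 hξ j)

theorem exists_hasDerivWithinAt_mulVec_of_gauge [Fintype m] {ε : ℝ} {M : ℝ → Matrix m n ℝ}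
    {M' : Matrix m n ℝ} {A : Matrix n n ℝ} {B : Matrix m m ℝ} {ξ : ℝ → n → ℝ} {ξ' : n → ℝ}
    (hM : ∀ i j, HasDerivWithinAt (fun t => M t i j) (M' i j) I s)
    (hξ : HasDerivWithinAt ξ ξ' I s) (hsys : ε • ξ' = A *ᵥ ξ s)
    (hgauge : ε • M' + M s * A = B * M s) :
    ∃ d, HasDerivWithinAt (fun t => M t *ᵥ ξ t) d I s ∧ ε • d = B *ᵥ (M s *ᵥ ξ s) := by
  refine ⟨_, HasDerivWithinAt.matrix_mulVec hM hξ, ?_⟩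
  rw [smul_add, ← smul_mulVec, ← mulVec_smul, hsys, mulVec_mulVec, mulVec_mulVec, ← add_mulVec,
    hgauge]

end Gauge

noncomputable def symmetrizer (q : ℝ) : Matrix (Fin 2) (Fin 2) ℝ :=
  (√2)⁻¹ • !![q⁻¹, -q⁻¹; q, q]

noncomputable def symmetrizerInv (q : ℝ) : Matrix (Fin 2) (Fin 2) ℝ :=
  (√2)⁻¹ • !![q, q⁻¹; -q, q⁻¹]

noncomputable def symmetrizerInvDeriv (q q' : ℝ) : Matrix (Fin 2) (Fin 2) ℝ :=
  (√2)⁻¹ • !![q', -q' / q ^ 2; -q', -q' / q ^ 2]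

theorem symmetrizer_inv {q : ℝ} (hq : q ≠ 0) : (symmetrizer q)⁻¹ = symmetrizerInv q := by
  refine inv_eq_right_inv ?_
  have hsqrt : (√2)⁻¹ * (√2)⁻¹ = (2 : ℝ)⁻¹ := by
    rw [← mul_inv, Real.mul_self_sqrt zero_le_two]
  rw [symmetrizer, symmetrizerInv, smul_mul_smul_comm, hsqrt, mul_fin_two]
  ext i j
  fin_cases i <;> fin_cases j <;> simp [hq] <;> ring

theorem hasDerivWithinAt_symmetrizerInv_apply {q : ℝ → ℝ} {q' : ℝ} {I : Set ℝ} {s : ℝ}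
    (hq : HasDerivWithinAt q q' I s) (hs : q s ≠ 0) (i j : Fin 2) :
    HasDerivWithinAt (fun t => symmetrizerInv (q t) i j) (symmetrizerInvDeriv (q s) q' i j) I s := by
  have hinv := (hq.fun_inv hs).const_mul (√2)⁻¹
  fin_cases i <;> fin_cases j <;>
    simp only [symmetrizerInv, symmetrizerInvDeriv, Fin.zero_eta, Fin.mk_one, Fin.isValue,
      Matrix.smul_apply, of_apply, cons_val', cons_val_zero, cons_val_one, cons_val_fin_one,
      smul_eq_mul, mul_neg]
  exacts [hq.const_mul _, hinv, (hq.const_mul _).neg, hinv]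

theorem symmetrizerInv_gauge (ε : ℝ) {q : ℝ} (q' : ℝ) (hq : q ≠ 0) :
    ε • symmetrizerInvDeriv q q' + symmetrizerInv q * !![0, 1; q ^ 4, 0]
      = !![q ^ 2, -ε * (q' / q); -ε * (q' / q), -q ^ 2] * symmetrizerInv q := by
  rw [symmetrizerInv, symmetrizerInvDeriv, smul_comm, mul_smul_comm, smul_mul, ← smul_add]
  congr 1
  rw [mul_fin_two, mul_fin_two]
  ext i j
  fin_cases i <;> fin_cases j <;> simp <;> field_simp <;> ring

theorem transformation_to_symmetric_form_general (ε : ℝ)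
    (I : Set ℝ)
    (h h' : ℝ → ℝ)
    (hpos : ∀ s ∈ I, 0 < h s)
    (hderiv : ∀ s ∈ I, HasDerivWithinAt h (h' s) I s)
    (A₂ S₂ A₃ : ℝ → Matrix (Fin 2) (Fin 2) ℝ)
    (hA₂ : ∀ s, A₂ s = !![0, 1; h s, 0])
    (hS₂ : ∀ s, S₂ s = (Real.sqrt 2)⁻¹ •
      !![h s ^ (-(1/4) : ℝ), -(h s ^ (-(1/4) : ℝ)); h s ^ ((1/4) : ℝ), h s ^ ((1/4) : ℝ)])
    (hA₃ : ∀ s, A₃ s = !![h s ^ ((1/2) : ℝ), -(ε/4) * (h' s / h s);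
                          -(ε/4) * (h' s / h s), -(h s ^ ((1/2) : ℝ))])
    (ξ₂ ξ₂' : ℝ → Fin 2 → ℝ)
    (hξ₂ : ∀ s ∈ I, HasDerivWithinAt ξ₂ (ξ₂' s) I s)
    (hξ₂eq : ∀ s ∈ I, ε • ξ₂' s = (A₂ s).mulVec (ξ₂ s)) :
    ∀ s ∈ I, ∃ d : Fin 2 → ℝ,
      HasDerivWithinAt (fun s => (S₂ s)⁻¹.mulVec (ξ₂ s)) d I s ∧
      ε • d = (A₃ s).mulVec ((S₂ s)⁻¹.mulVec (ξ₂ s)) := by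
  intro s hs
  set q : ℝ → ℝ := fun t => h t ^ (1/4 : ℝ)
  have hq_pos : 0 < q s := Real.rpow_pos_of_pos (hpos s hs) _
  have hS₂_inv : ∀ t ∈ I, (S₂ t)⁻¹ = symmetrizerInv (q t) := fun t ht => by
    rw [hS₂, Real.rpow_neg (hpos t ht).le, ← symmetrizer,
      symmetrizer_inv (Real.rpow_pos_of_pos (hpos t ht) _).ne']
  have hq : HasDerivWithinAt q (q s * (h' s / (4 * h s))) I s := by
    convert (hderiv s hs).rpow_const (p := 1/4) (Or.inl (hpos s hs).ne') using 1
    rw [Real.rpow_sub_one (hpos s hs).ne']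
    ring
  have hh : h s = q s ^ 4 := by
    rw [← Real.rpow_mul_natCast (hpos s hs).le]; norm_num
  have hsqrt : h s ^ (1/2 : ℝ) = q s ^ 2 := by
    rw [← Real.rpow_mul_natCast (hpos s hs).le]; norm_num
  have hlog : ε / 4 * (h' s / h s) = ε * (q s * (h' s / (4 * h s)) / q s) := by
    field_simp
  obtain ⟨d, hd, hεd⟩ := exists_hasDerivWithinAt_mulVec_of_gauge
    (hasDerivWithinAt_symmetrizerInv_apply hq hq_pos.ne') (hξ₂ s hs)
    (by rw [hξ₂eq s hs, hA₂, hh]) (symmetrizerInv_gauge ε _ hq_pos.ne')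
  refine ⟨d, hd.congr (fun t ht => by rw [hS₂_inv t ht]) (by rw [hS₂_inv s hs]), ?_⟩
  rw [hεd, hS₂_inv s hs, hA₃, hsqrt, neg_mul, neg_mul, hlog]

/-- The similarity transformation `ξ₃ = S₂(s)⁻¹ ξ₂` turns the system
`ε ξ₂' = A₂(s) ξ₂` (with `A₂ = [[0,1],[h,0]]`, `h > 0`) into `ε ξ₃' = A₃(s) ξ₃` with
`A₃ = [[√h, -(ε/4)h'/h], [-(ε/4)h'/h, -√h]]`. -/
theorem transformation_to_symmetric_form (ε : ℝ) (hε : 0 < ε)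
    (I : Set ℝ) (hI : I.OrdConnected)
    (h h' : ℝ → ℝ)
    (hpos : ∀ s ∈ I, 0 < h s)
    (hderiv : ∀ s ∈ I, HasDerivWithinAt h (h' s) I s)
    (A₂ S₂ A₃ : ℝ → Matrix (Fin 2) (Fin 2) ℝ)
    (hA₂ : ∀ s, A₂ s = !![0, 1; h s, 0])
    (hS₂ : ∀ s, S₂ s = (Real.sqrt 2)⁻¹ •
      !![h s ^ (-(1/4) : ℝ), -(h s ^ (-(1/4) : ℝ)); h s ^ ((1/4) : ℝ), h s ^ ((1/4) : ℝ)])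
    (hA₃ : ∀ s, A₃ s = !![h s ^ ((1/2) : ℝ), -(ε/4) * (h' s / h s);
                          -(ε/4) * (h' s / h s), -(h s ^ ((1/2) : ℝ))])
    (ξ₂ ξ₂' : ℝ → Fin 2 → ℝ)
    (hξ₂ : ∀ s ∈ I, HasDerivWithinAt ξ₂ (ξ₂' s) I s)
    (hξ₂eq : ∀ s ∈ I, ε • ξ₂' s = (A₂ s).mulVec (ξ₂ s)) :
    ∀ s ∈ I, ∃ d : Fin 2 → ℝ,
      HasDerivWithinAt (fun s => (S₂ s)⁻¹.mulVec (ξ₂ s)) d I s ∧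
      ε • d = (A₃ s).mulVec ((S₂ s)⁻¹.mulVec (ξ₂ s)) :=
  transformation_to_symmetric_form_general ε I h h' hpos hderiv A₂ S₂ A₃ hA₂ hS₂ hA₃ ξ₂ ξ₂' hξ₂
    hξ₂eq
end

section
/- Let μ > 0 and let (u₁, u₂) : I → ℝ² be differentiable on an interval I ⊆ ℝ and satisfy the variational equations μ u₁'(z̄) = 4 z̄ u₁(z̄) + 2 u₂(z̄) − 2 u₁(z̄)², μ u₂'(z̄) = −2(1+μ) u₁(z̄). Define K(z̄) = [1 + (2/(1+μ))(u₂(z̄) − u₁(z̄)²)] · exp(−2 u₂(z̄)/(1+μ)). Then K is differentiable on I and μ K'(z̄) = −(16 z̄/(1+μ)) u₁(z̄)² exp(−2 u₂(z̄)/(1+μ)) for all z̄ ∈ I. In particular, if 0 ∈ I then K'(0) = 0, so K is a first integral of the system at z̄ = 0. -/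
open Set

theorem hasDerivWithinAt_first_integral {s : Set ℝ} {u₁ u₂ : ℝ → ℝ} {z d₁ d₂ : ℝ} (μ : ℝ)
    (h₁ : HasDerivWithinAt u₁ d₁ s z) (h₂ : HasDerivWithinAt u₂ d₂ s z) :
    HasDerivWithinAt
      (fun z => (1 + 2 / (1 + μ) * (u₂ z - u₁ z ^ 2)) * Real.exp (-(2 * u₂ z) / (1 + μ)))
      ((2 / (1 + μ) * (d₂ - 2 * u₁ z * d₁)
          - (1 + 2 / (1 + μ) * (u₂ z - u₁ z ^ 2)) * (2 * d₂ / (1 + μ)))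
        * Real.exp (-(2 * u₂ z) / (1 + μ))) s z := by
  have hpoly : HasDerivWithinAt (fun z => 1 + 2 / (1 + μ) * (u₂ z - u₁ z ^ 2))
      (2 / (1 + μ) * (d₂ - 2 * u₁ z * d₁)) s z :=
    (((h₂.sub (h₁.pow 2)).const_mul (2 / (1 + μ))).const_add 1).congr_deriv (by simp)
  have hexp : HasDerivWithinAt (fun z => Real.exp (-(2 * u₂ z) / (1 + μ)))
      (Real.exp (-(2 * u₂ z) / (1 + μ)) * (-(2 * d₂) / (1 + μ))) s z :=
    (((h₂.const_mul 2).neg).div_const (1 + μ)).exp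
  exact (hpoly.mul hexp).congr_deriv (by ring)

/-- The cubic terms in `x` cancel because `(1 + μ) * (2 / (1 + μ)) = 2`. -/
theorem mul_first_integral_deriv_eq {μ z x y d₁ d₂ : ℝ} (E : ℝ) (hμ : 1 + μ ≠ 0)
    (heq₁ : μ * d₁ = 4 * z * x + 2 * y - 2 * x ^ 2)
    (heq₂ : μ * d₂ = -(2 * (1 + μ)) * x) :
    μ * ((2 / (1 + μ) * (d₂ - 2 * x * d₁) - (1 + 2 / (1 + μ) * (y - x ^ 2)) * (2 * d₂ / (1 + μ)))
        * E) = -(16 * z / (1 + μ)) * x ^ 2 * E := by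
  have hinv : (1 + μ)⁻¹ * (1 + μ) = 1 := inv_mul_cancel₀ hμ
  linear_combination (2 / (1 + μ) - 2 * (1 + 2 / (1 + μ) * (y - x ^ 2)) / (1 + μ)) * E * heq₂
    - 2 * x * (2 / (1 + μ)) * E * heq₁ + 8 * (1 + μ)⁻¹ * E * x * (y - x ^ 2) * hinv

theorem first_integral_K_derivative_general (μ : ℝ) (hμ : 0 < μ)
    (I : Set ℝ)
    (u₁ u₂ u₁' u₂' : ℝ → ℝ)
    (hu₁ : ∀ z ∈ I, HasDerivWithinAt u₁ (u₁' z) I z)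
    (hu₂ : ∀ z ∈ I, HasDerivWithinAt u₂ (u₂' z) I z)
    (heq₁ : ∀ z ∈ I, μ * u₁' z = 4 * z * u₁ z + 2 * u₂ z - 2 * (u₁ z) ^ 2)
    (heq₂ : ∀ z ∈ I, μ * u₂' z = -(2 * (1 + μ)) * u₁ z)
    (K : ℝ → ℝ)
    (hK : ∀ z, K z = (1 + (2 / (1 + μ)) * (u₂ z - (u₁ z) ^ 2)) *
      Real.exp (-(2 * u₂ z) / (1 + μ))) :
    (∀ z ∈ I, ∃ d : ℝ, HasDerivWithinAt K d I z ∧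
        μ * d = -(16 * z / (1 + μ)) * (u₁ z) ^ 2 * Real.exp (-(2 * u₂ z) / (1 + μ))) ∧
    (0 ∈ I → HasDerivWithinAt K 0 I 0) := by
  obtain rfl : K = _ := funext hK
  have hderiv : ∀ z ∈ I, ∃ d : ℝ, HasDerivWithinAt _ d I z ∧
      μ * d = -(16 * z / (1 + μ)) * (u₁ z) ^ 2 * Real.exp (-(2 * u₂ z) / (1 + μ)) :=
    fun z hz ↦ ⟨_, hasDerivWithinAt_first_integral μ (hu₁ z hz) (hu₂ z hz),
      mul_first_integral_deriv_eq _ (by positivity) (heq₁ z hz) (heq₂ z hz)⟩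
  refine ⟨hderiv, fun h0 ↦ ?_⟩
  obtain ⟨d, hd, hμd⟩ := hderiv 0 h0
  obtain rfl : d = 0 := by simpa [hμ.ne'] using hμd
  exact hd

/-- Along solutions of the variational equations
`μ u₁' = 4z̄ u₁ + 2u₂ - 2u₁²`, `μ u₂' = -2(1+μ) u₁`, the quantity
`K = [1 + (2/(1+μ))(u₂ - u₁²)] e^{-2u₂/(1+μ)}` satisfies
`μ K' = -(16 z̄/(1+μ)) u₁² e^{-2u₂/(1+μ)}`; in particular `K'(0) = 0`. -/
theorem first_integral_K_derivative (μ : ℝ) (hμ : 0 < μ)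
    (I : Set ℝ) (hI : I.OrdConnected)
    (u₁ u₂ u₁' u₂' : ℝ → ℝ)
    (hu₁ : ∀ z ∈ I, HasDerivWithinAt u₁ (u₁' z) I z)
    (hu₂ : ∀ z ∈ I, HasDerivWithinAt u₂ (u₂' z) I z)
    (heq₁ : ∀ z ∈ I, μ * u₁' z = 4 * z * u₁ z + 2 * u₂ z - 2 * (u₁ z) ^ 2)
    (heq₂ : ∀ z ∈ I, μ * u₂' z = -(2 * (1 + μ)) * u₁ z)
    (K : ℝ → ℝ)
    (hK : ∀ z, K z = (1 + (2 / (1 + μ)) * (u₂ z - (u₁ z) ^ 2)) *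
      Real.exp (-(2 * u₂ z) / (1 + μ))) :
    (∀ z ∈ I, ∃ d : ℝ, HasDerivWithinAt K d I z ∧
        μ * d = -(16 * z / (1 + μ)) * (u₁ z) ^ 2 * Real.exp (-(2 * u₂ z) / (1 + μ))) ∧
    (0 ∈ I → HasDerivWithinAt K 0 I 0) :=
  first_integral_K_derivative_general μ hμ I u₁ u₂ u₁' u₂' hu₁ hu₂ heq₁ heq₂ K hK
end

section
/- Let μ > 0 and 0 ≤ z̄₀ < z̄₁. Suppose (x̄, η) : [z̄₀, z̄₁] → ℝ² is differentiable and satisfies the rectified folded-node system μ x̄'(z̄) = 2 η(z̄) − (1+μ), μ η'(z̄) = −4 x̄(z̄) η(z̄) − 2 z̄ on [z̄₀, z̄₁], with initial condition x̄(z̄₀) < 0 and η(z̄₀) < 0. Then x̄(z̄) < 0 and η(z̄) < 0 for all z̄ ∈ [z̄₀, z̄₁]; that is, the domain {x̄ < 0, η < 0} is positively invariant for z̄ ≥ 0. -/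
/-!
The half-line `η = 0` is a barrier: there `μ η' = -2z̄ < 0` for `z̄ > 0`, so `η` cannot become
positive, and `η ≤ 0` throughout. Then `μ x̄' = 2η - (1 + μ) < 0`, so `x̄` decreases and stays
negative. Finally `x̄ < 0`, `η ≤ 0` and `z̄ ≥ 0` give `μ η' = -4x̄η - 2z̄ ≤ 0`, so `η` decreases
too and stays strictly negative.
-/

open Set

theorem nonpos_of_hasDerivWithinAt_neg_of_eq_zero {f f' : ℝ → ℝ} {a b : ℝ}
    (hf : ∀ t ∈ Icc a b, HasDerivWithinAt f (f' t) (Icc a b) t) (ha : f a ≤ 0)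
    (hzero : ∀ t ∈ Ico a b, f t = 0 → f' t < 0) : ∀ t ∈ Icc a b, f t ≤ 0 := fun _ ht =>
  image_le_of_deriv_right_lt_deriv_boundary' (B := fun _ => 0) (B' := fun _ => 0)
    (fun t ht => (hf t ht).continuousWithinAt)
    (fun t ht => (hf t (Ico_subset_Icc_self ht)).mono_of_mem_nhdsWithin
      (Icc_mem_nhdsGE_of_mem ht))
    ha continuousOn_const (fun _ _ => hasDerivWithinAt_const _ _ _) hzero ht

theorem antitoneOn_Icc_of_hasDerivWithinAt_nonpos {f f' : ℝ → ℝ} {a b : ℝ}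
    (hf : ∀ t ∈ Icc a b, HasDerivWithinAt f (f' t) (Icc a b) t)
    (hf' : ∀ t ∈ Ioo a b, f' t ≤ 0) : AntitoneOn f (Icc a b) :=
  antitoneOn_of_hasDerivWithinAt_nonpos (convex_Icc a b)
    (fun t ht => (hf t ht).continuousWithinAt)
    (fun t ht => by
      rw [interior_Icc] at ht ⊢
      exact (hf t (Ioo_subset_Icc_self ht)).mono Ioo_subset_Icc_self)
    (by simpa only [interior_Icc] using hf')

theorem negative_quadrant_positively_invariant_general (μ : ℝ) (hμ : 0 < μ)
    (z₀ z₁ : ℝ) (hz₀ : 0 ≤ z₀)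
    (x η x' η' : ℝ → ℝ)
    (hx : ∀ z ∈ Set.Icc z₀ z₁, HasDerivWithinAt x (x' z) (Set.Icc z₀ z₁) z)
    (hη : ∀ z ∈ Set.Icc z₀ z₁, HasDerivWithinAt η (η' z) (Set.Icc z₀ z₁) z)
    (heq₁ : ∀ z ∈ Set.Icc z₀ z₁, μ * x' z = 2 * η z - (1 + μ))
    (heq₂ : ∀ z ∈ Set.Icc z₀ z₁, μ * η' z = -(4 * x z * η z) - 2 * z)
    (hx0 : x z₀ < 0) (hη0 : η z₀ < 0) :
    ∀ z ∈ Set.Icc z₀ z₁, x z < 0 ∧ η z < 0 := by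
  have hη_nonpos : ∀ z ∈ Icc z₀ z₁, η z ≤ 0 :=
    nonpos_of_hasDerivWithinAt_neg_of_eq_zero hη hη0.le fun z hz hηz => by
      have hz_pos : 0 < z := hz₀.trans_lt (hz.1.lt_of_ne (by rintro rfl; linarith))
      have h := heq₂ z (Ico_subset_Icc_self hz)
      rw [hηz] at h
      nlinarith
  have hx_anti : AntitoneOn x (Icc z₀ z₁) :=
    antitoneOn_Icc_of_hasDerivWithinAt_nonpos hx fun z hz => by
      have h := heq₁ z (Ioo_subset_Icc_self hz)
      have := hη_nonpos z (Ioo_subset_Icc_self hz)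
      nlinarith
  have hx_neg : ∀ z ∈ Icc z₀ z₁, x z < 0 := fun z hz =>
    (hx_anti (left_mem_Icc.2 (hz.1.trans hz.2)) hz hz.1).trans_lt hx0
  have hη_anti : AntitoneOn η (Icc z₀ z₁) :=
    antitoneOn_Icc_of_hasDerivWithinAt_nonpos hη fun z hz => by
      have hz' := Ioo_subset_Icc_self hz
      have h := heq₂ z hz'
      have hxη : 0 ≤ x z * η z :=
        mul_nonneg_of_nonpos_of_nonpos (hx_neg z hz').le (hη_nonpos z hz')
      nlinarith [hz₀.trans hz.1.le]
  exact fun z hz =>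
    ⟨hx_neg z hz, (hη_anti (left_mem_Icc.2 (hz.1.trans hz.2)) hz hz.1).trans_lt hη0⟩

/-- For the rectified folded-node system `μ x̄' = 2η - (1+μ)`,
`μ η' = -4x̄η - 2z̄` with `z̄ ≥ 0`, the quadrant `{x̄ < 0, η < 0}` is positively
invariant. -/
theorem negative_quadrant_positively_invariant (μ : ℝ) (hμ : 0 < μ)
    (z₀ z₁ : ℝ) (hz₀ : 0 ≤ z₀) (hz : z₀ < z₁)
    (x η x' η' : ℝ → ℝ)
    (hx : ∀ z ∈ Set.Icc z₀ z₁, HasDerivWithinAt x (x' z) (Set.Icc z₀ z₁) z)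
    (hη : ∀ z ∈ Set.Icc z₀ z₁, HasDerivWithinAt η (η' z) (Set.Icc z₀ z₁) z)
    (heq₁ : ∀ z ∈ Set.Icc z₀ z₁, μ * x' z = 2 * η z - (1 + μ))
    (heq₂ : ∀ z ∈ Set.Icc z₀ z₁, μ * η' z = -(4 * x z * η z) - 2 * z)
    (hx0 : x z₀ < 0) (hη0 : η z₀ < 0) :
    ∀ z ∈ Set.Icc z₀ z₁, x z < 0 ∧ η z < 0 :=
  negative_quadrant_positively_invariant_general μ hμ z₀ z₁ hz₀ x η x' η' hx hη heq₁ heq₂ hx0 hη0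
end

section
/- Let f : ℝ → (−1, ∞) be the function determined by log(1 + f(t)) = f(t) − 2t² and sign f(t) = sign t. Then: (i) for every t ≤ 0 one has e^{−1−2t²} − 1 ≤ f(t) ≤ 0; and (ii) there exist constants δ > 0 and C > 0 such that |f(t) − 2t| ≤ C t² for all t with |t| ≤ δ. -/
/-!
Part (i) is read off from `1 + f t = exp (f t - 2 t²)` and `f t > -1`.

For part (ii) write `x = f t`, so that `x - log (1 + x) = 2 t²`. With `s = √(1 + x)`,
`log (1 + x) = 2 log s ≤ 2 (s - 1)` gives `(s - 1)² ≤ 2 t²`, hence `|x| = O(|t|)`.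
The Taylor estimate `log (1 + x) = x - x² / 2 + O(x³)` then yields `|x² - 4 t²| = O(|x|³)`,
and since `x` and `t` have the same sign, `|x + 2 t| ≥ |x|`; dividing by `|x|` gives
`|x - 2 t| = O(x²) = O(t²)`.
-/

open Real

lemma exp_neg_one_sub_sub_one_le {y a : ℝ} (hy : -1 < y) (h : log (1 + y) = y - a) :
    exp (-1 - a) - 1 ≤ y := by
  have hexp : exp (y - a) = 1 + y := by rw [← h, exp_log (by linarith)]
  have : exp (-1 - a) ≤ exp (y - a) := exp_le_exp.mpr (by linarith)
  linarith

lemma sq_sqrt_one_add_sub_one_le {x : ℝ} (hx : -1 < x) :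
    (√(1 + x) - 1) ^ 2 ≤ x - log (1 + x) := by
  have hs : 0 < √(1 + x) := sqrt_pos.mpr (by linarith)
  have hsq : √(1 + x) ^ 2 = 1 + x := sq_sqrt (by linarith)
  have hlog : log (1 + x) = 2 * log √(1 + x) := by rw [log_sqrt (by linarith)]; ring
  nlinarith [log_le_sub_one_of_pos hs]

lemma abs_le_of_sub_log_le {x t : ℝ} (hx : -1 < x) (h : x - log (1 + x) ≤ 2 * t ^ 2) :
    |x| ≤ 2 * |t| * (2 * |t| + 2) := by
  set s := √(1 + x)
  have hx_eq : x = (s - 1) * ((s - 1) + 2) := by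
    have : s ^ 2 = 1 + x := sq_sqrt (by linarith)
    linear_combination -this
  have hs : |s - 1| ≤ 2 * |t| := by
    rw [← abs_two, ← abs_mul, ← sq_le_sq]
    nlinarith [sq_sqrt_one_add_sub_one_le hx, sq_nonneg t]
  calc |x| = |s - 1| * |(s - 1) + 2| := by rw [hx_eq, abs_mul]
    _ ≤ |s - 1| * (|s - 1| + 2) := by
        gcongr; exact (abs_add_le _ _).trans_eq (by rw [abs_two])
    _ ≤ 2 * |t| * (2 * |t| + 2) := by gcongr

lemma abs_log_one_add_sub_add_sq_div_two_le {x : ℝ} (hx : |x| ≤ 1 / 2) :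
    |log (1 + x) - x + x ^ 2 / 2| ≤ 2 * |x| ^ 3 := by
  have htaylor := abs_log_sub_add_sum_range_le (x := -x) (by rw [abs_neg]; linarith) 2
  simp only [Finset.sum_range_succ, Finset.sum_range_zero, abs_neg, sub_neg_eq_add] at htaylor
  norm_num at htaylor
  calc |log (1 + x) - x + x ^ 2 / 2| = |-x + x ^ 2 / 2 + log (1 + x)| := by ring_nf
    _ ≤ |x| ^ 3 / (1 - |x|) := htaylor
    _ ≤ 2 * |x| ^ 3 := by
        rw [div_le_iff₀ (by linarith)]
        nlinarith [pow_nonneg (abs_nonneg x) 3]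

lemma abs_sub_two_mul_le_of_sub_log_eq {x t : ℝ} (hx : |x| ≤ 1 / 2) (hxt : 0 ≤ x * t)
    (h : x - log (1 + x) = 2 * t ^ 2) : |x - 2 * t| ≤ 4 * x ^ 2 := by
  rcases eq_or_ne x 0 with rfl | hx0
  · have : t = 0 := by simpa using h.symm
    simp [this]
  have hdiff : |x - 2 * t| * |x + 2 * t| ≤ 4 * |x| ^ 3 := by
    have : (x - 2 * t) * (x + 2 * t) = 2 * (log (1 + x) - x + x ^ 2 / 2) := by
      linear_combination 2 * h
    rw [← abs_mul, this, abs_mul, abs_two]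
    linarith [abs_log_one_add_sub_add_sq_div_two_le hx]
  have hsum : |x| ≤ |x + 2 * t| := by
    rw [← sq_le_sq]; nlinarith [sq_nonneg t]
  have hprod : |x - 2 * t| * |x| ≤ 4 * x ^ 2 * |x| := by
    calc |x - 2 * t| * |x| ≤ |x - 2 * t| * |x + 2 * t| := by gcongr
      _ ≤ 4 * |x| ^ 3 := hdiff
      _ = 4 * x ^ 2 * |x| := by rw [← sq_abs x]; ring
  exact le_of_mul_le_mul_right hprod (abs_pos.mpr hx0)

/-- Properties of the function `f` defined by `log(1+f(t)) = f(t) - 2t²`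
with `sign f(t) = sign t`: (i) `e^{-1-2t²} - 1 ≤ f(t) ≤ 0` for `t ≤ 0`;
(ii) `f(t) = 2t + O(t²)` near `t = 0`. -/
theorem properties_of_f (f : ℝ → ℝ)
    (hf : ∀ t : ℝ, -1 < f t ∧ Real.log (1 + f t) = f t - 2 * t ^ 2 ∧
        (0 < t → 0 < f t) ∧ (t = 0 → f t = 0) ∧ (t < 0 → f t < 0)) :
    (∀ t : ℝ, t ≤ 0 → Real.exp (-1 - 2 * t ^ 2) - 1 ≤ f t ∧ f t ≤ 0) ∧
    ∃ δ : ℝ, 0 < δ ∧ ∃ C : ℝ, 0 < C ∧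
      ∀ t : ℝ, |t| ≤ δ → |f t - 2 * t| ≤ C * t ^ 2 := by
  have hsign : ∀ t, 0 ≤ f t * t := by
    intro t
    obtain ⟨-, -, hpos, hzero, hneg⟩ := hf t
    rcases lt_trichotomy t 0 with ht | rfl | ht
    · exact mul_nonneg_of_nonpos_of_nonpos (hneg ht).le ht.le
    · simp
    · exact mul_nonneg (hpos ht).le ht.le
  refine ⟨fun t ht => ⟨exp_neg_one_sub_sub_one_le (hf t).1 (hf t).2.1, ?_⟩,
    1 / 20, by norm_num, 100, by norm_num, fun t ht => ?_⟩
  · rcases ht.lt_or_eq with ht | rfl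
    · exact ((hf t).2.2.2.2 ht).le
    · exact ((hf 0).2.2.2.1 rfl).le
  · obtain ⟨hgt, hlog, -⟩ := hf t
    have hx : |f t| ≤ 5 * |t| := by
      have := abs_le_of_sub_log_le hgt (by linarith)
      nlinarith [abs_nonneg t]
    calc |f t - 2 * t| ≤ 4 * f t ^ 2 :=
          abs_sub_two_mul_le_of_sub_log_eq (by linarith) (hsign t) (by linarith)
      _ = 4 * |f t| ^ 2 := by rw [sq_abs]
      _ ≤ 4 * (5 * |t|) ^ 2 := by gcongr
      _ = 100 * t ^ 2 := by rw [mul_pow, sq_abs]; ring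
end
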